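/- Let m be an odd squarefree positive integer, p a prime not dividing m with p = qm + r (0 < r < m), and write Φ_m = Σ_s a_s x^s and G = Ψ_m Σ_{u≥0} x^{um} = Σ_t e_t x^t with blocks g_{i,j}(x) = Σ_{k=0}^{l} e_{ip+mj+k} x^k (l = m-1 if j < q, l = r-1 if j = q). Then the blocks of Φ_{mp} satisfy f_{m,p,i,j} = -Σ_{s=0}^{i} a_s g_{i-s, j} for all 0 ≤ i ≤ φ(m)-1 and 0 ≤ j ≤ q. -/

import Mathlib

open Polynomial

/-! Since `Φ_m Ψ_m = x^m - 1` and `(x^m - 1) Σ_u x^{um} = -1`, the series `G` is `-1/Φ_m`.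
For `p ∤ m` we have `Φ_m(x^p) = Φ_{mp}(x) Φ_m(x)`, hence `Φ_{mp} = -Φ_m(x^p) G`. The
coefficient of `x^{ip+c}` with `c < p` in this product is `-Σ_{s ≤ i} a_s e_{(i-s)p+c}`, and
for `c = jm + k` these are exactly the coefficients of `x^k` on both sides of the block
identity. -/

/-- The `m`-th inverse cyclotomic polynomial `Ψ_m = (X^m - 1)/Φ_m`. -/
noncomputable def invCyclotomic (m : ℕ) : ℤ[X] := (X ^ m - 1) /ₘ cyclotomic m ℤ

/-- The formal power series `G = Ψ_m · Σ_{u≥0} x^{um}`, with coefficients `e_t`. -/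
noncomputable def Gseries (m : ℕ) : PowerSeries ℤ :=
  ((invCyclotomic m : ℤ[X]) : PowerSeries ℤ) *
    PowerSeries.mk fun t => if m ∣ t then (1 : ℤ) else 0

/-- The block `g_{i,j}(x) = Σ_{k=0}^{l} e_{ip+mj+k} x^k`, with `l = m-1` for `j < q` and
`l = r-1` for `j = q` (here `q = p / m`, `r = p % m`). -/
noncomputable def gBlock (m p i j : ℕ) : ℤ[X] :=
  ∑ k ∈ Finset.range (if j < p / m then m else p % m),
    C (PowerSeries.coeff (i * p + m * j + k) (Gseries m)) * X ^ k

/-- The block `f_{m,p,i,j}` of `Φ_{mp}`. -/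
noncomputable def cycBlock (m p i j : ℕ) : ℤ[X] :=
  ∑ k ∈ Finset.range m,
    if j * m + k < p then C ((cyclotomic (m * p) ℤ).coeff (i * p + j * m + k)) * X ^ k else 0

theorem cyclotomic_mul_invCyclotomic (m : ℕ) :
    cyclotomic m ℤ * invCyclotomic m = X ^ m - 1 := by
  obtain ⟨k, hk⟩ := cyclotomic.dvd_X_pow_sub_one m ℤ
  rw [invCyclotomic, hk, mul_divByMonic_cancel_left _ (cyclotomic.monic m ℤ)]

theorem X_pow_sub_one_mul_mk_ite_dvd {R : Type*} [Ring R] {m : ℕ} (hm : 0 < m) :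
    ((PowerSeries.X : PowerSeries R) ^ m - 1) * PowerSeries.mk (fun t => if m ∣ t then 1 else 0)
      = -1 := by
  ext n
  rw [sub_mul, one_mul, map_sub, PowerSeries.coeff_X_pow_mul', PowerSeries.coeff_mk, map_neg,
    PowerSeries.coeff_one]
  rcases Nat.eq_zero_or_pos n with rfl | hn
  · simp [hm.ne']
  by_cases hmn : m ≤ n
  · simp [hmn, hn.ne', Nat.dvd_sub_iff_left hmn dvd_rfl]
  · have hnd : ¬ m ∣ n := fun h => hmn (Nat.le_of_dvd hn h)
    simp [hmn, hn.ne', hnd]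

theorem cyclotomic_mul_Gseries {m : ℕ} (hm : 0 < m) :
    (cyclotomic m ℤ : PowerSeries ℤ) * Gseries m = -1 := by
  rw [Gseries, ← mul_assoc, ← coe_mul, cyclotomic_mul_invCyclotomic, coe_sub, coe_pow, coe_X,
    coe_one, X_pow_sub_one_mul_mk_ite_dvd hm]

theorem coeff_coe_expand_mul {R : Type*} [CommSemiring R] {p : ℕ} (f : R[X])
    (g : PowerSeries R) (i : ℕ) {c : ℕ} (hc : c < p) :
    PowerSeries.coeff (i * p + c) ((expand R p f : PowerSeries R) * g)
      = ∑ s ∈ Finset.range (i + 1), f.coeff s * PowerSeries.coeff ((i - s) * p + c) g := by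
  induction f using Polynomial.induction_on' with
  | add f₁ f₂ h₁ h₂ => simp [h₁, h₂, add_mul, Finset.sum_add_distrib]
  | monomial n a =>
    rw [expand_monomial, coe_monomial, PowerSeries.monomial_eq_C_mul_X_pow, mul_assoc,
      PowerSeries.coeff_C_mul, PowerSeries.coeff_X_pow_mul']
    simp only [coeff_monomial, ite_mul, zero_mul, Finset.sum_ite_eq, Finset.mem_range]
    by_cases hni : n ≤ i
    · have hnp : n * p ≤ i * p := Nat.mul_le_mul_right p hni
      rw [if_pos (by omega), if_pos (by omega), Nat.sub_mul, Nat.sub_add_comm hnp]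
    · have hip : i * p + c < n * p := by nlinarith
      rw [if_neg (by omega), if_neg (by omega), mul_zero]

theorem coe_cyclotomic_mul_prime {m p : ℕ} (hm : 0 < m) (hp : p.Prime) (hpm : ¬ p ∣ m) :
    (cyclotomic (m * p) ℤ : PowerSeries ℤ)
      = -(expand ℤ p (cyclotomic m ℤ) : PowerSeries ℤ) * Gseries m := by
  rw [cyclotomic_expand_eq_cyclotomic_mul hp hpm, coe_mul, neg_mul, mul_assoc,
    cyclotomic_mul_Gseries hm, mul_neg_one, neg_neg]

theorem coeff_cyclotomic_mul_prime {m p : ℕ} (hm : 0 < m) (hp : p.Prime) (hpm : ¬ p ∣ m)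
    (i : ℕ) {c : ℕ} (hc : c < p) :
    (cyclotomic (m * p) ℤ).coeff (i * p + c)
      = -∑ s ∈ Finset.range (i + 1),
          (cyclotomic m ℤ).coeff s * PowerSeries.coeff ((i - s) * p + c) (Gseries m) := by
  rw [← coeff_coe, coe_cyclotomic_mul_prime hm hp hpm, neg_mul, map_neg,
    coeff_coe_expand_mul _ _ i hc]

theorem coeff_sum_range_C_mul_X_pow {R : Type*} [Semiring R] (L : ℕ) (f : ℕ → R) (n : ℕ) :
    (∑ k ∈ Finset.range L, C (f k) * X ^ k).coeff n = if n < L then f n else 0 := by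
  simp [finsetSum_coeff, coeff_C_mul, coeff_X_pow]

theorem lt_and_add_lt_iff_lt_blockLength {m p j k : ℕ} (hm : 0 < m) (hj : j ≤ p / m) :
    (k < m ∧ j * m + k < p) ↔ k < if j < p / m then m else p % m := by
  have hdiv := Nat.div_add_mod' p m
  have hmod := Nat.mod_lt p hm
  split_ifs with hjq
  · have : (j + 1) * m ≤ p / m * m := Nat.mul_le_mul_right m hjq
    rw [add_mul, one_mul] at this
    omega
  · obtain rfl : j = p / m := by omega
    omega

theorem coeff_gBlock {m p i j : ℕ} (hm : 0 < m) (hj : j ≤ p / m) (k : ℕ) :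
    (gBlock m p i j).coeff k
      = if k < m ∧ j * m + k < p then PowerSeries.coeff (i * p + m * j + k) (Gseries m)
        else 0 := by
  rw [gBlock, coeff_sum_range_C_mul_X_pow]
  exact if_congr (lt_and_add_lt_iff_lt_blockLength hm hj).symm rfl rfl

theorem coeff_cycBlock (m p i j k : ℕ) :
    (cycBlock m p i j).coeff k
      = if k < m ∧ j * m + k < p then (cyclotomic (m * p) ℤ).coeff (i * p + j * m + k)
        else 0 := by
  have : cycBlock m p i j = ∑ k ∈ Finset.range m,
      C (if j * m + k < p then (cyclotomic (m * p) ℤ).coeff (i * p + j * m + k) else 0) * X ^ k :=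
    Finset.sum_congr rfl fun k _ => by split_ifs <;> simp
  rw [this, coeff_sum_range_C_mul_X_pow, ite_and]

theorem cycBlock_eq_neg_sum_gBlock_general (m p : ℕ) (hm : 0 < m) (hp : p.Prime) (hpm : ¬ p ∣ m) :
    ∀ i < Nat.totient m, ∀ j ≤ p / m,
      cycBlock m p i j =
        -∑ s ∈ Finset.range (i + 1),
            C ((cyclotomic m ℤ).coeff s) * gBlock m p (i - s) j := by
  intro i _ j hj
  ext k
  simp only [coeff_cycBlock, coeff_neg, finsetSum_coeff, coeff_C_mul, coeff_gBlock hm hj]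
  by_cases hk : k < m ∧ j * m + k < p
  · simp only [hk, and_self, if_true]
    rw [add_assoc, coeff_cyclotomic_mul_prime hm hp hpm i hk.2]
    simp_rw [mul_comm m j, add_assoc]
  · simp [hk]

/-- `f_{m,p,i,j} = -Σ_{s=0}^{i} a_s g_{i-s,j}`, where `Φ_m = Σ_s a_s x^s`. -/
theorem cycBlock_eq_neg_sum_gBlock (m p : ℕ) (hm : 0 < m) (hodd : Odd m)
    (hsf : Squarefree m) (hp : p.Prime) (hpm : ¬ p ∣ m) :
    ∀ i < Nat.totient m, ∀ j ≤ p / m,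
      cycBlock m p i j =
        -∑ s ∈ Finset.range (i + 1),
            C ((cyclotomic m ℤ).coeff s) * gBlock m p (i - s) j :=
  cycBlock_eq_neg_sum_gBlock_general m p hm hp hpm
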